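/- Let κ = (ξ,η) be a quaternionic spinor and v a paravector. Form the 2×2 quaternionic matrix M = κ·(conjugate transpose of κ̌v) + (κ̌v)·(conjugate transpose of κ), explicitly M = [[ξ v̄ η* + η' v ξ̄, −ξ v̄ ξ* + η' v η̄],[η v̄ η* − ξ' v ξ̄, −η v̄ ξ* − ξ' v η̄]]. Then pdet M = −|v|² |κ|⁴. (M is the derivative of the map φ₁(κ) = κ κ̄ᵀ from spinors to the future light cone in ℝ^{1,4}, evaluated in the direction κ̌v.) -/

import Mathlib

open Quaternion

noncomputable section

/-- The involution `q* = a + bi + cj - dk` on quaternions (Clifford reversion). -/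
def qstar (q : ℍ[ℝ]) : ℍ[ℝ] := ⟨q.re, q.imI, q.imJ, -q.imK⟩

/-- The involution `q' = a - bi - cj + dk` on quaternions. -/
def qprime (q : ℍ[ℝ]) : ℍ[ℝ] := ⟨q.re, -q.imI, -q.imJ, q.imK⟩

/-- A paravector is an element of `ℝ + ℝi + ℝj`, i.e. a quaternion with zero `k`-component. -/
def IsParavector (q : ℍ[ℝ]) : Prop := q.imK = 0

/-- The quaternion `k`. -/
def qk : ℍ[ℝ] := ⟨0, 0, 0, 1⟩

/-- A quaternionic spinor: a pair `(ξ, η) ≠ (0,0)` with `ξ * conj η` a paravector. -/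
def IsSpinor (κ : ℍ[ℝ] × ℍ[ℝ]) : Prop := κ ≠ 0 ∧ IsParavector (κ.1 * star κ.2)

/-- The bracket `{κ₁, κ₂} = ξ₁* η₂ − η₁* ξ₂`. -/
def bracket (κ₁ κ₂ : ℍ[ℝ] × ℍ[ℝ]) : ℍ[ℝ] := qstar κ₁.1 * κ₂.2 - qstar κ₁.2 * κ₂.1

/-- Right multiplication `κ x = (ξ x, η x)`. -/
def rmul (κ : ℍ[ℝ] × ℍ[ℝ]) (x : ℍ[ℝ]) : ℍ[ℝ] × ℍ[ℝ] := (κ.1 * x, κ.2 * x)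

/-- The complementary pair `κ̌ = (η', −ξ')`. -/
def qcheck (κ : ℍ[ℝ] × ℍ[ℝ]) : ℍ[ℝ] × ℍ[ℝ] := (qprime κ.2, -qprime κ.1)

/-- The real inner product on `ℍ²`: `⟨κ₁, κ₂⟩ = Re (ξ₁ ξ̄₂ + η₁ η̄₂)`. -/
def qinner (κ₁ κ₂ : ℍ[ℝ] × ℍ[ℝ]) : ℝ := (κ₁.1 * star κ₂.1 + κ₁.2 * star κ₂.2).re

/-- The squared norm `|κ|² = |ξ|² + |η|²` on `ℍ²`. -/
def qnsq (κ : ℍ[ℝ] × ℍ[ℝ]) : ℝ := Quaternion.normSq κ.1 + Quaternion.normSq κ.2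

/-- The pseudo-determinant of a 2×2 quaternionic matrix: `pdet [[a,b],[c,d]] = a* d − c* b`. -/
def pdet (A : Matrix (Fin 2) (Fin 2) ℍ[ℝ]) : ℍ[ℝ] := qstar (A 0 0) * A 1 1 - qstar (A 1 0) * A 0 1

/-- A Clifford matrix: columns are quaternionic spinors and the pseudo-determinant is 1. -/
def IsClifford (A : Matrix (Fin 2) (Fin 2) ℍ[ℝ]) : Prop :=
  IsSpinor (A 0 0, A 1 0) ∧ IsSpinor (A 0 1, A 1 1) ∧ pdet A = 1

/-- Matrix-vector action of a 2×2 quaternionic matrix on a column vector in `ℍ²`. -/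
def mact (A : Matrix (Fin 2) (Fin 2) ℍ[ℝ]) (κ : ℍ[ℝ] × ℍ[ℝ]) : ℍ[ℝ] × ℍ[ℝ] :=
  (A 0 0 * κ.1 + A 0 1 * κ.2, A 1 0 * κ.1 + A 1 1 * κ.2)

/-! The pseudo-determinant of `[κ₁ | κ₂]` is the bracket `{κ₁, κ₂}`, which is biadditive and satisfies
`{κ₁ x, κ₂ y} = x* {κ₁, κ₂} y`. The columns of `M` are `κ p + κ̌ q` and `κ r + κ̌ s` with
`p = v̄ η*`, `q = v ξ̄`, `r = −v̄ ξ*`, `s = v η̄`, so `pdet M` expands into four brackets.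
The spinor condition kills `{κ, κ}` and `{κ̌, κ̌} = {κ, κ}'`, while `{κ, κ̌} = −|κ|²` and
`{κ̌, κ} = |κ|²`; what is left is `|κ|² (q* r − p* s) = −|κ|² |v|² (|ξ|² + |η|²)`. -/

section Involutions

variable (x y : ℍ[ℝ])

@[simp] lemma qstar_re : (qstar x).re = x.re := rfl
@[simp] lemma qstar_imI : (qstar x).imI = x.imI := rfl
@[simp] lemma qstar_imJ : (qstar x).imJ = x.imJ := rfl
@[simp] lemma qstar_imK : (qstar x).imK = -x.imK := rfl
@[simp] lemma qprime_re : (qprime x).re = x.re := rfl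
@[simp] lemma qprime_imI : (qprime x).imI = -x.imI := rfl
@[simp] lemma qprime_imJ : (qprime x).imJ = -x.imJ := rfl
@[simp] lemma qprime_imK : (qprime x).imK = x.imK := rfl

lemma qstar_mul : qstar (x * y) = qstar y * qstar x := by
  ext <;> simp <;> ring

lemma qprime_mul : qprime (x * y) = qprime x * qprime y := by
  ext <;> simp <;> ring

lemma qprime_sub : qprime (x - y) = qprime x - qprime y := by
  ext <;> simp <;> ring

@[simp] lemma qprime_zero : qprime 0 = 0 := by
  ext <;> simp

@[simp] lemma qstar_qstar : qstar (qstar x) = x := by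
  ext <;> simp

lemma qstar_add : qstar (x + y) = qstar x + qstar y := by
  ext <;> simp [add_comm]

@[simp] lemma qstar_neg : qstar (-x) = -qstar x := by
  ext <;> simp

@[simp] lemma qstar_qprime : qstar (qprime x) = star x := by
  ext <;> simp

@[simp] lemma qprime_qstar : qprime (qstar x) = star x := by
  ext <;> simp

@[simp] lemma qstar_star : qstar (star x) = qprime x := by
  ext <;> simp

@[simp] lemma star_qprime : star (qprime x) = qstar x := by
  ext <;> simp

@[simp] lemma normSq_qprime : normSq (qprime x) = normSq x := by
  simp [normSq_def']

lemma qstar_mul_qprime : qstar x * qprime x = normSq x := by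
  rw [← star_qprime, star_mul_self, normSq_qprime]

lemma qstar_eq_self_iff : qstar x = x ↔ IsParavector x := by
  simp [Quaternion.ext_iff, IsParavector, neg_eq_self]

lemma imK_qstar_mul : (qstar x * y).imK = -(x * star y).imK := by
  simp; ring

end Involutions

lemma IsParavector.star {v : ℍ[ℝ]} (hv : IsParavector v) : IsParavector (star v) := by
  simp_all [IsParavector]

section Bracket

variable (κ κ₁ κ₂ κ₃ : ℍ[ℝ] × ℍ[ℝ])

lemma pdet_eq_bracket (A : Matrix (Fin 2) (Fin 2) ℍ[ℝ]) :
    pdet A = bracket (A 0 0, A 1 0) (A 0 1, A 1 1) := rfl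

lemma bracket_add_left : bracket (κ₁ + κ₂) κ₃ = bracket κ₁ κ₃ + bracket κ₂ κ₃ := by
  simp only [bracket, Prod.fst_add, Prod.snd_add, qstar_add, add_mul]
  abel

lemma bracket_add_right : bracket κ₁ (κ₂ + κ₃) = bracket κ₁ κ₂ + bracket κ₁ κ₃ := by
  simp only [bracket, Prod.fst_add, Prod.snd_add, mul_add]
  abel

lemma bracket_rmul_rmul (x y : ℍ[ℝ]) :
    bracket (rmul κ₁ x) (rmul κ₂ y) = qstar x * bracket κ₁ κ₂ * y := by
  simp only [bracket, rmul, qstar_mul, mul_sub, sub_mul, mul_assoc]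

lemma bracket_qcheck_right : bracket κ (qcheck κ) = -(qnsq κ : ℍ[ℝ]) := by
  simp only [bracket, qcheck, qnsq, mul_neg, qstar_mul_qprime, coe_add]
  abel

lemma bracket_qcheck_left : bracket (qcheck κ) κ = qnsq κ := by
  simp only [bracket, qcheck, qnsq, qstar_qprime, qstar_neg, star_mul_self, neg_mul, coe_add]
  abel

lemma bracket_qcheck_qcheck : bracket (qcheck κ) (qcheck κ) = qprime (bracket κ κ) := by
  simp only [bracket, qcheck, qstar_qprime, qstar_neg, qprime_sub, qprime_mul, qprime_qstar,
    mul_neg, neg_mul]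
  abel

lemma bracket_self_eq_zero {κ : ℍ[ℝ] × ℍ[ℝ]} (h : IsParavector (κ.1 * star κ.2)) :
    bracket κ κ = 0 := by
  have hw : qstar (qstar κ.1 * κ.2) = qstar κ.1 * κ.2 := by
    rw [qstar_eq_self_iff, IsParavector, imK_qstar_mul, h, neg_zero]
  rw [bracket, sub_eq_zero, ← hw, qstar_mul, qstar_qstar]

lemma bracket_rmul_add_rmul_qcheck (hκ : bracket κ κ = 0) (p q r s : ℍ[ℝ]) :
    bracket (rmul κ p + rmul (qcheck κ) q) (rmul κ r + rmul (qcheck κ) s) =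
      qstar q * qnsq κ * r - qstar p * qnsq κ * s := by
  rw [bracket_add_left, bracket_add_right, bracket_add_right, bracket_rmul_rmul, bracket_rmul_rmul,
    bracket_rmul_rmul, bracket_rmul_rmul, bracket_qcheck_qcheck, hκ, bracket_qcheck_right,
    bracket_qcheck_left, qprime_zero]
  noncomm_ring

end Bracket

lemma mul_coe_mul_star (a : ℍ[ℝ]) (c : ℝ) : a * c * star a = (c * normSq a : ℝ) := by
  rw [← coe_commutes, mul_assoc, self_mul_star, coe_mul]

/-- For a spinor `κ = (ξ,η)` and a paravector `v`, the derivative matrix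
`M = κ (κ̌v)̄ᵀ + (κ̌v) κ̄ᵀ` has pseudo-determinant `−|v|² |κ|⁴`. -/
theorem derivative_det_miracle (ξ η v : ℍ[ℝ]) (hκ : IsSpinor (ξ, η)) (hv : IsParavector v) :
    pdet !![ξ * star v * qstar η + qprime η * v * star ξ,
            -(ξ * star v * qstar ξ) + qprime η * v * star η;
            η * star v * qstar η - qprime ξ * v * star ξ,
            -(η * star v * qstar ξ) - qprime ξ * v * star η] =
      -(((Quaternion.normSq v * (Quaternion.normSq ξ + Quaternion.normSq η) ^ 2 : ℝ)) : ℍ[ℝ]) := by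
  set κ : ℍ[ℝ] × ℍ[ℝ] := (ξ, η)
  calc pdet _
      = bracket (rmul κ (star v * qstar η) + rmul (qcheck κ) (v * star ξ))
          (rmul κ (-(star v * qstar ξ)) + rmul (qcheck κ) (v * star η)) := by
        rw [pdet_eq_bracket]
        congr 1 <;> ext <;> simp [κ, rmul, qcheck, mul_assoc, sub_eq_add_neg]
    _ = qstar (v * star ξ) * qnsq κ * -(star v * qstar ξ)
          - qstar (star v * qstar η) * qnsq κ * (v * star η) :=
        bracket_rmul_add_rmul_qcheck κ (bracket_self_eq_zero hκ.2) ..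
    _ = -(qnsq κ * normSq (qprime ξ * v) : ℝ) - (qnsq κ * normSq (η * star v) : ℝ) := by
        rw [qstar_mul, qstar_mul, qstar_qstar, (qstar_eq_self_iff _).2 hv,
          (qstar_eq_self_iff _).2 hv.star, qstar_star, show v * star η = star (η * star v) by simp,
          show star v * qstar ξ = star (qprime ξ * v) by simp, mul_neg, mul_coe_mul_star,
          mul_coe_mul_star]
    _ = _ := by
        norm_cast
        congr 1
        simp only [qnsq, κ, map_mul, normSq_star, normSq_qprime]
        ring
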